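/- Let W be a general safety objective over C whose prefix preorder ⪯_W is well-founded. Then the trivial one-state memory structure M_triv suffices to play optimally for W in all arenas (i.e., memoryless strategies suffice) if and only if the prefix preorder ⪯_W is total (every two finite words are comparable for ⪯_W). -/

import Mathlib

set_option autoImplicit false

namespace RegularMemory

/-- Concatenation of a finite word with an infinite word. -/
def wcat {C : Type} (w : List C) (x : ℕ → C) : ℕ → C := fun n =>
  if h : n < w.length then w.get ⟨n, h⟩ else x (n - w.length)

/-- The infinite word `w^ω` (junk value if `w` is empty). -/
noncomputable def wpow {C : Type} [Nonempty C] : List C → ℕ → C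
  | [] => fun _ => Classical.arbitrary C
  | (a :: l) => fun n => (a :: l).get ⟨n % (a :: l).length, Nat.mod_lt n (Nat.succ_pos _)⟩

/-- Winning continuations `w⁻¹W` of the finite word `w` for the objective `W`. -/
def contAfter {C : Type} (W : Set (ℕ → C)) (w : List C) : Set (ℕ → C) :=
  {x | wcat w x ∈ W}

/-- Prefix preorder `w₁ ⪯_W w₂`. -/
def prefLe {C : Type} (W : Set (ℕ → C)) (w₁ w₂ : List C) : Prop :=
  contAfter W w₁ ⊆ contAfter W w₂

/-- Strict prefix relation `w₁ ≺_W w₂`. -/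
def prefLt {C : Type} (W : Set (ℕ → C)) (w₁ w₂ : List C) : Prop :=
  prefLe W w₁ w₂ ∧ ¬ prefLe W w₂ w₁

/-- Comparability for the prefix preorder. -/
def PrefComparable {C : Type} (W : Set (ℕ → C)) (w₁ w₂ : List C) : Prop :=
  prefLe W w₁ w₂ ∨ prefLe W w₂ w₁

/-- The general reachability objective derived from `A`: infinite words with a prefix in `A`. -/
def ReachObj {C : Type} (A : Set (List C)) : Set (ℕ → C) :=
  {x | ∃ n : ℕ, (List.ofFn fun i : Fin n => x i) ∈ A}

/-- The general safety objective derived from `A`. -/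
def SafeObj {C : Type} (A : Set (List C)) : Set (ℕ → C) :=
  (ReachObj A)ᶜ

/-- The prefix preorder of `W` has finitely many equivalence classes. -/
def FinClasses {C : Type} (W : Set (ℕ → C)) : Prop :=
  (Set.range fun w : List C => contAfter W w).Finite

/-- The prefix preorder of `W` is well-founded:
every nonempty chain contains a minimal element. -/
def PrefWellFounded {C : Type} (W : Set (ℕ → C)) : Prop :=
  ∀ S : Set (List C), S.Nonempty →
    (∀ w₁ ∈ S, ∀ w₂ ∈ S, PrefComparable W w₁ w₂) →
    ∃ w₀ ∈ S, ∀ w ∈ S, ¬ prefLt W w w₀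

/-- Chromatic memory structure. -/
structure MemStruct (C : Type) where
  M : Type
  init : M
  upd : M → C → M

/-- Extension of the update function to finite words. -/
def MemStruct.updStar {C : Type} (N : MemStruct C) (m : N.M) (w : List C) : N.M :=
  w.foldl N.upd m

/-- The trivial one-state memory structure. -/
def trivMem (C : Type) : MemStruct C :=
  ⟨Unit, (), fun _ _ => ()⟩

/-- `W` is `N`-strongly-monotone. -/
def StronglyMonotone {C : Type} (N : MemStruct C) (W : Set (ℕ → C)) : Prop :=
  ∀ w₁ w₂ : List C,
    N.updStar N.init w₁ = N.updStar N.init w₂ → PrefComparable W w₁ w₂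

/-- `W` is `N`-progress-consistent. -/
def ProgressConsistent {C : Type} [Nonempty C] (N : MemStruct C) (W : Set (ℕ → C)) : Prop :=
  ∀ (m : N.M) (w₁ w₂ : List C),
    N.updStar N.init w₁ = m → N.updStar m w₂ = m →
    prefLt W w₁ (w₁ ++ w₂) → wcat w₁ (wpow w₂) ∈ W

/-- Two-player arena with colored edges; Player-1 vertices have outgoing edges
(so that strategies of Player 1 exist). -/
structure Arena (C : Type) where
  V : Type
  P1 : V → Prop
  E : Set (V × C × V)
  succ : ∀ v : V, P1 v → ∃ e ∈ E, e.1 = v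

namespace Arena

/-- Valid histories starting at a given vertex. -/
def HistFrom {C : Type} (A : Arena C) : A.V → List (A.V × C × A.V) → Prop
  | _, [] => True
  | v, e :: l => e ∈ A.E ∧ e.1 = v ∧ HistFrom A e.2.2 l

/-- Endpoint of a history. -/
def endFrom {C : Type} (A : Arena C) : A.V → List (A.V × C × A.V) → A.V
  | v, [] => v
  | _, e :: l => endFrom A e.2.2 l

/-- Infinite plays from a vertex. -/
def PlayFrom {C : Type} (A : Arena C) (v : A.V) (π : ℕ → A.V × C × A.V) : Prop :=
  (π 0).1 = v ∧ ∀ n : ℕ, π n ∈ A.E ∧ (π n).2.2 = (π (n + 1)).1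

/-- Colors along a play. -/
def playCol {C V : Type} (π : ℕ → V × C × V) : ℕ → C :=
  fun n => (π n).2.1

/-- Strategies of Player 1: on every valid history ending in a Player-1 vertex,
the strategy picks an edge leaving that vertex. -/
structure Strategy {C : Type} (A : Arena C) where
  next : A.V → List (A.V × C × A.V) → A.V × C × A.V
  legal : ∀ (v : A.V) (l : List (A.V × C × A.V)),
    A.HistFrom v l → A.P1 (A.endFrom v l) →
      next v l ∈ A.E ∧ (next v l).1 = A.endFrom v l

/-- A play from `v` is consistent with the strategy `σ`. -/
def Strategy.Consistent {C : Type} {A : Arena C} (σ : A.Strategy) (v : A.V)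
    (π : ℕ → A.V × C × A.V) : Prop :=
  ∀ n : ℕ, A.P1 (A.endFrom v (List.ofFn fun i : Fin n => π i)) →
    π n = σ.next v (List.ofFn fun i : Fin n => π i)

/-- `σ` is winning from `v` for the objective `W`. -/
def Strategy.WinningFrom {C : Type} {A : Arena C} (σ : A.Strategy)
    (W : Set (ℕ → C)) (v : A.V) : Prop :=
  ∀ π : ℕ → A.V × C × A.V, A.PlayFrom v π → σ.Consistent v π → playCol π ∈ W

/-- `σ` is optimal in `(A, W)`: winning from every vertex from which
Player 1 has some winning strategy. -/
def Strategy.Optimal {C : Type} {A : Arena C} (σ : A.Strategy) (W : Set (ℕ → C)) : Prop :=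
  ∀ v : A.V, (∃ σ' : A.Strategy, σ'.WinningFrom W v) → σ.WinningFrom W v

/-- `σ` is based on the memory structure `N`. -/
def Strategy.BasedOn {C : Type} {A : Arena C} (σ : A.Strategy) (N : MemStruct C) : Prop :=
  ∃ nxt : A.V → N.M → A.V × C × A.V,
    ∀ (v : A.V) (l : List (A.V × C × A.V)),
      A.HistFrom v l → A.P1 (A.endFrom v l) →
        σ.next v l = nxt (A.endFrom v l) (N.updStar N.init (l.map fun e => e.2.1))

/-- Finite arena: finitely many vertices and edges. -/
def IsFinite {C : Type} (A : Arena C) : Prop := Finite A.V ∧ A.E.Finite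

/-- Finitely branching arena. -/
def FinBranching {C : Type} (A : Arena C) : Prop :=
  ∀ v : A.V, {e ∈ A.E | e.1 = v}.Finite

/-- One-player arena of Player 1. -/
def OneP1 {C : Type} (A : Arena C) : Prop := ∀ v : A.V, A.P1 v

end Arena

/-- `N` suffices to play optimally for `W` in all arenas of the class `P`. -/
def SufficesIn {C : Type} (N : MemStruct C) (W : Set (ℕ → C))
    (P : Arena C → Prop) : Prop :=
  ∀ A : Arena C, P A → ∃ σ : A.Strategy, σ.BasedOn N ∧ σ.Optimal W

/-- Deterministic automaton (with complete transition function). -/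
structure DetAuto (C : Type) where
  Q : Type
  init : Q
  δ : Q → C → Q
  F : Set Q

/-- Extension of the transition function to finite words. -/
def DetAuto.δStar {C : Type} (D : DetAuto C) (q : D.Q) (w : List C) : D.Q :=
  w.foldl D.δ q

/-- Language recognized by `D`. -/
def DetAuto.lang {C : Type} (D : DetAuto C) : Set (List C) :=
  {w | D.δStar D.init w ∈ D.F}

/-- Prefix preorder extended to automaton states. -/
def statePrefLe {C : Type} (D : DetAuto C) (W : Set (ℕ → C)) (q₁ q₂ : D.Q) : Prop :=
  ∀ w₁ w₂ : List C,
    D.δStar D.init w₁ = q₁ → D.δStar D.init w₂ = q₂ → prefLe W w₁ w₂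

def statePrefLt {C : Type} (D : DetAuto C) (W : Set (ℕ → C)) (q₁ q₂ : D.Q) : Prop :=
  statePrefLe D W q₁ q₂ ∧ ¬ statePrefLe D W q₂ q₁

def StateComparable {C : Type} (D : DetAuto C) (W : Set (ℕ → C)) (q₁ q₂ : D.Q) : Prop :=
  statePrefLe D W q₁ q₂ ∨ statePrefLe D W q₂ q₁

/-- Monotone decomposition of `D` with `k` sets. -/
def MonotoneDecomposition {C : Type} (D : DetAuto C) (W : Set (ℕ → C))
    {k : ℕ} (Γ : Fin k → Set D.Q) : Prop :=
  (∀ q : D.Q, ∃ i : Fin k, q ∈ Γ i) ∧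
  (∀ (c : C) (i : Fin k), ∃ j : Fin k, (fun q => D.δ q c) '' Γ i ⊆ Γ j) ∧
  (∀ i : Fin k, ∀ q₁ ∈ Γ i, ∀ q₂ ∈ Γ i, StateComparable D W q₁ q₂)

end RegularMemory


namespace RegularMemory

/-!
If `w₁` and `w₂` are incomparable, pick `x₁ ∈ w₁⁻¹W \ w₂⁻¹W` and `x₂ ∈ w₂⁻¹W \ w₁⁻¹W`. In the
one-player arena where reading `w₁` or `w₂` leads to a common vertex at which Player 1 chooses
between the continuations `x₁` and `x₂`, Player 1 wins from both starting vertices, but a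
memoryless strategy makes the same choice after both words and so loses from one of them.

Conversely, let `⪯_W` be total and well-founded. At a vertex from which Player 1 wins after some
word, there is a `⪯_W`-least such word `w₀`; the memoryless strategy plays the first move of a
strategy winning after `w₀`. Along a consistent play from a winning vertex, Player 1 then keeps
winning after the colors seen so far. Should a prefix `u` leave `Safe(A)`, then `u⁻¹W = ∅`, so
Player 1 could force the play into a Player-2 vertex without successors. This is ruled out by
letting the strategy descend along the ordinal rank of that attractor wherever it can, so that
no vertex of an infinite play lies in it.
-/

section Words

variable {C : Type}

lemma wcat_nil (x : ℕ → C) : wcat [] x = x := by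
  funext n
  simp [wcat]

lemma wcat_cons (c : C) (w : List C) (x : ℕ → C) :
    wcat (c :: w) x = wcat [c] (wcat w x) := by
  funext n
  cases n <;> simp [wcat]

lemma wcat_append (u v : List C) (x : ℕ → C) : wcat (u ++ v) x = wcat u (wcat v x) := by
  induction u with
  | nil => rw [List.nil_append, wcat_nil]
  | cons a u ih => rw [List.cons_append, wcat_cons, ih, ← wcat_cons]

lemma wcat_head_tail (x : ℕ → C) : wcat [x 0] (fun n => x (n + 1)) = x := by
  funext n
  cases n <;> simp [wcat]

lemma ofFn_wcat_length (w : List C) (x : ℕ → C) :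
    (List.ofFn fun i : Fin w.length => wcat w x i) = w := by
  apply List.ext_getElem (by simp)
  intro n _ _
  simp [wcat]

lemma ofFn_succ_eq_append {α : Type*} (f : ℕ → α) (n : ℕ) :
    (List.ofFn fun i : Fin (n + 1) => f i) = (List.ofFn fun i : Fin n => f i) ++ [f n] := by
  rw [List.ofFn_succ_last]
  simp

variable {W : Set (ℕ → C)}

lemma contAfter_nil : contAfter W [] = W := by
  simp [contAfter, wcat_nil]

lemma contAfter_append (u v : List C) : contAfter W (u ++ v) = contAfter (contAfter W u) v := by
  ext x
  simp [contAfter, wcat_append]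

lemma prefLe_append {w u : List C} (h : prefLe W w u) (v : List C) :
    prefLe W (w ++ v) (u ++ v) := by
  rw [prefLe, contAfter_append, contAfter_append]
  exact fun y hy => h hy

lemma contAfter_safeObj_eq_empty {B : Set (List C)} {w : List C} (hw : w ∈ B) :
    contAfter (SafeObj B) w = ∅ :=
  Set.eq_empty_of_forall_notMem fun y hy => hy ⟨w.length, by rwa [ofFn_wcat_length]⟩

lemma PrefWellFounded.exists_least (hwf : PrefWellFounded W)
    (htot : ∀ w₁ w₂ : List C, PrefComparable W w₁ w₂) {S : Set (List C)} (hS : S.Nonempty) :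
    ∃ w₀ ∈ S, ∀ w ∈ S, prefLe W w₀ w := by
  obtain ⟨w₀, hw₀, hmin⟩ := hwf S hS fun w₁ _ w₂ _ => htot w₁ w₂
  exact ⟨w₀, hw₀, fun w hw => (htot w₀ w).elim id fun hle =>
    Classical.byContradiction fun h => hmin w hw ⟨hle, h⟩⟩

end Words

namespace Arena

variable {C : Type} {A : Arena C}

lemma endFrom_append_singleton (v : A.V) (l : List (A.V × C × A.V)) (e : A.V × C × A.V) :
    A.endFrom v (l ++ [e]) = e.2.2 := by
  induction l generalizing v with
  | nil => rfl
  | cons f l ih => exact ih f.2.2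

lemma histFrom_append_singleton {v : A.V} {l : List (A.V × C × A.V)} {e : A.V × C × A.V} :
    A.HistFrom v (l ++ [e]) ↔ A.HistFrom v l ∧ e ∈ A.E ∧ e.1 = A.endFrom v l := by
  induction l generalizing v with
  | nil => simp [HistFrom, endFrom]
  | cons f l ih =>
    simp only [List.cons_append, HistFrom, endFrom, ih]
    tauto

variable {v : A.V} {π : ℕ → A.V × C × A.V}

lemma PlayFrom.endFrom_ofFn (hp : A.PlayFrom v π) (n : ℕ) :
    A.endFrom v (List.ofFn fun i : Fin n => π i) = (π n).1 := by
  induction n with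
  | zero => exact hp.1.symm
  | succ n ih => rw [ofFn_succ_eq_append, endFrom_append_singleton, (hp.2 n).2]

lemma PlayFrom.histFrom_ofFn (hp : A.PlayFrom v π) (n : ℕ) :
    A.HistFrom v (List.ofFn fun i : Fin n => π i) := by
  induction n with
  | zero => trivial
  | succ n ih =>
    rw [ofFn_succ_eq_append, histFrom_append_singleton, hp.endFrom_ofFn]
    exact ⟨ih, (hp.2 n).1, rfl⟩

lemma PlayFrom.tail (hp : A.PlayFrom v π) : A.PlayFrom (π 0).2.2 fun n => π (n + 1) :=
  ⟨(hp.2 0).2.symm, fun n => hp.2 (n + 1)⟩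

lemma PlayFrom.cons {e : A.V × C × A.V} (he : e ∈ A.E) (hp : A.PlayFrom e.2.2 π) :
    A.PlayFrom e.1 (wcat [e] π) := by
  refine ⟨rfl, fun n => ?_⟩
  cases n with
  | zero => exact ⟨he, hp.1.symm⟩
  | succ n => simpa [wcat] using hp.2 n

lemma playCol_eq_wcat_tail (π : ℕ → A.V × C × A.V) :
    playCol π = wcat [(π 0).2.1] (playCol fun n => π (n + 1)) :=
  (wcat_head_tail _).symm

lemma playCol_wcat_singleton (e : A.V × C × A.V) (π : ℕ → A.V × C × A.V) :
    playCol (wcat [e] π) = wcat [e.2.1] (playCol π) := by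
  funext n
  cases n <;> simp [playCol, wcat]

end Arena

namespace Arena.Strategy

variable {C : Type} {A : Arena C}

def ofMove (f : A.V → A.V × C × A.V) (hf : ∀ v, A.P1 v → f v ∈ A.E ∧ (f v).1 = v) :
    A.Strategy :=
  ⟨fun v l => f (A.endFrom v l), fun _ _ _ h1 => hf _ h1⟩

lemma Consistent.eq_move {σ : A.Strategy} {v : A.V} {π : ℕ → A.V × C × A.V}
    {g : A.V → A.V × C × A.V}
    (hg : ∀ v l, A.HistFrom v l → A.P1 (A.endFrom v l) → σ.next v l = g (A.endFrom v l))
    (hp : A.PlayFrom v π) (hc : σ.Consistent v π) {n : ℕ} (h1 : A.P1 (π n).1) :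
    π n = g (π n).1 := by
  rw [← hp.endFrom_ofFn] at h1 ⊢
  rw [hc n h1, hg v _ (hp.histFrom_ofFn n) h1]

lemma exists_consistent_play (σ : A.Strategy) (I : A.V → Prop) {v : A.V} (hv : I v)
    (hI₁ : ∀ l, A.HistFrom v l → I (A.endFrom v l) → A.P1 (A.endFrom v l) →
      I (σ.next v l).2.2)
    (hI₂ : ∀ u, I u → ¬ A.P1 u → ∃ e ∈ A.E, e.1 = u ∧ I e.2.2) :
    ∃ π, A.PlayFrom v π ∧ σ.Consistent v π := by
  classical
  let move : List (A.V × C × A.V) → A.V × C × A.V := fun l =>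
    if h : ¬ A.P1 (A.endFrom v l) ∧ ∃ e ∈ A.E, e.1 = A.endFrom v l ∧ I e.2.2 then h.2.choose
    else σ.next v l
  have move_spec : ∀ l, A.HistFrom v l → I (A.endFrom v l) →
      move l ∈ A.E ∧ (move l).1 = A.endFrom v l ∧ I (move l).2.2 := by
    intro l hl hI
    by_cases h1 : A.P1 (A.endFrom v l)
    · have hmove : move l = σ.next v l := dif_neg fun h => h.1 h1
      rw [hmove]
      exact ⟨(σ.legal v l hl h1).1, (σ.legal v l hl h1).2, hI₁ l hl hI h1⟩
    · have h : ¬ A.P1 (A.endFrom v l) ∧ ∃ e ∈ A.E, e.1 = A.endFrom v l ∧ I e.2.2 :=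
        ⟨h1, hI₂ _ hI h1⟩
      have hmove : move l = h.2.choose := dif_pos h
      rw [hmove]
      exact h.2.choose_spec
  let hist : ℕ → List (A.V × C × A.V) := fun n => Nat.rec [] (fun _ l => l ++ [move l]) n
  have hist_spec : ∀ n, A.HistFrom v (hist n) ∧ I (A.endFrom v (hist n)) := by
    intro n
    induction n with
    | zero => exact ⟨trivial, hv⟩
    | succ n ih =>
      obtain ⟨hE, hs, hI⟩ := move_spec _ ih.1 ih.2
      show A.HistFrom v (hist n ++ [move (hist n)]) ∧ I (A.endFrom v (hist n ++ [move (hist n)]))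
      rw [histFrom_append_singleton, endFrom_append_singleton]
      exact ⟨⟨ih.1, hE, hs⟩, hI⟩
  have ofFn_hist : ∀ n, (List.ofFn fun i : Fin n => move (hist i)) = hist n := by
    intro n
    induction n with
    | zero => rfl
    | succ n ih => rw [ofFn_succ_eq_append (fun i => move (hist i)), ih]
  refine ⟨fun n => move (hist n), ⟨?_, fun n => ⟨?_, ?_⟩⟩, fun n h1 => ?_⟩
  · exact (move_spec [] trivial hv).2.1
  · exact (move_spec _ (hist_spec n).1 (hist_spec n).2).1
  · rw [(move_spec _ (hist_spec (n + 1)).1 (hist_spec (n + 1)).2).2.1]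
    exact (endFrom_append_singleton _ _ _).symm
  · simp only [ofFn_hist] at h1 ⊢
    exact dif_neg fun h => h.1 h1

open scoped Classical in
noncomputable def after (σ : A.Strategy) (e : A.V × C × A.V) (he : e ∈ A.E) : A.Strategy where
  next u l := if u = e.2.2 then σ.next e.1 (e :: l) else σ.next u l
  legal u l hl h1 := by
    by_cases hu : u = e.2.2
    · rw [if_pos hu]
      subst hu
      exact σ.legal e.1 (e :: l) ⟨he, rfl, hl⟩ h1
    · rw [if_neg hu]
      exact σ.legal u l hl h1

lemma WinningFrom.after {X : Set (ℕ → C)} {σ : A.Strategy} {e : A.V × C × A.V}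
    (hσ : σ.WinningFrom X e.1) (he : e ∈ A.E) (hfirst : A.P1 e.1 → σ.next e.1 [] = e) :
    (σ.after e he).WinningFrom (contAfter X [e.2.1]) e.2.2 := by
  intro π hp hc
  have hofn : ∀ n, (List.ofFn fun i : Fin (n + 1) => wcat [e] π i) =
      e :: List.ofFn fun i : Fin n => π i := fun n => by
    rw [List.ofFn_succ]
    rfl
  have hc' : σ.Consistent e.1 (wcat [e] π) := by
    intro n h1
    cases n with
    | zero => exact (hfirst h1).symm
    | succ n =>
      rw [hofn] at h1 ⊢
      have hπ : wcat [e] π (n + 1) = π n := by simp [wcat]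
      simpa [hπ, Strategy.after] using hc n h1
  have hcol := hσ _ (hp.cons he) hc'
  rwa [playCol_wcat_singleton] at hcol

end Arena.Strategy

section Deadlock

variable {C : Type} {A : Arena C}

/-- Derivations that `v` lies in Player 1's attractor of the Player-2 vertices without
successors. They are data so that they carry ordinal ranks. -/
inductive DeadlockTree (A : Arena C) : A.V → Type
  | move {v : A.V} (e : A.V × C × A.V) (h1 : A.P1 v) (he : e ∈ A.E) (hs : e.1 = v)
      (t : DeadlockTree A e.2.2) : DeadlockTree A v
  | block {v : A.V} (h1 : ¬ A.P1 v)
      (t : ∀ e ∈ A.E, e.1 = v → DeadlockTree A e.2.2) : DeadlockTree A v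

noncomputable def DeadlockTree.rank : ∀ {v : A.V}, DeadlockTree A v → Ordinal.{0}
  | _, .move _ _ _ _ t => Order.succ t.rank
  | v, .block _ t =>
      Order.succ (⨆ e : {e // e ∈ A.E ∧ e.1 = v}, (t e.1 e.2.1 e.2.2).rank)

def ForcesDeadlock (A : Arena C) (v : A.V) : Prop := Nonempty (DeadlockTree A v)

noncomputable def deadlockRank (A : Arena C) (v : A.V) : Ordinal.{0} :=
  ⨅ t : DeadlockTree A v, t.rank

lemma deadlockRank_le {v : A.V} (t : DeadlockTree A v) : deadlockRank A v ≤ t.rank :=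
  ciInf_le' _ t

lemma ForcesDeadlock.exists_rank_eq {v : A.V} (h : ForcesDeadlock A v) :
    ∃ t : DeadlockTree A v, t.rank = deadlockRank A v :=
  haveI : Nonempty (DeadlockTree A v) := h
  ciInf_mem _

lemma ForcesDeadlock.exists_move {v : A.V} (h : ForcesDeadlock A v) (h1 : A.P1 v) :
    ∃ e ∈ A.E, e.1 = v ∧ ForcesDeadlock A e.2.2 ∧ deadlockRank A e.2.2 < deadlockRank A v := by
  obtain ⟨t, ht⟩ := h.exists_rank_eq
  cases t with
  | move e _ he hs t =>
    refine ⟨e, he, hs, ⟨t⟩, ?_⟩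
    calc deadlockRank A e.2.2 ≤ t.rank := deadlockRank_le t
      _ < Order.succ t.rank := Order.lt_succ _
      _ = deadlockRank A v := ht
  | block h1' _ => exact absurd h1 h1'

lemma ForcesDeadlock.of_not_P1 {v : A.V} (h : ForcesDeadlock A v) (h1 : ¬ A.P1 v)
    {e : A.V × C × A.V} (he : e ∈ A.E) (hs : e.1 = v) :
    ForcesDeadlock A e.2.2 ∧ deadlockRank A e.2.2 < deadlockRank A v := by
  obtain ⟨t, ht⟩ := h.exists_rank_eq
  cases t with
  | move _ h1' _ _ _ => exact absurd h1' h1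
  | block _ t =>
    refine ⟨⟨t e he hs⟩, ?_⟩
    calc deadlockRank A e.2.2 ≤ (t e he hs).rank := deadlockRank_le _
      _ ≤ ⨆ e : {e // e ∈ A.E ∧ e.1 = v}, (t e.1 e.2.1 e.2.2).rank :=
          le_ciSup Ordinal.bddAbove_of_small (⟨e, he, hs⟩ : {e // e ∈ A.E ∧ e.1 = v})
      _ < _ := Order.lt_succ _
      _ = deadlockRank A v := ht

lemma not_forcesDeadlock_of_play {v : A.V} {π : ℕ → A.V × C × A.V} (hp : A.PlayFrom v π)
    (hmove : ∀ n, A.P1 (π n).1 → ForcesDeadlock A (π n).1 →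
      ForcesDeadlock A (π n).2.2 ∧ deadlockRank A (π n).2.2 < deadlockRank A (π n).1)
    (n : ℕ) : ¬ ForcesDeadlock A (π n).1 := by
  have step : ∀ k, ForcesDeadlock A (π k).1 →
      ForcesDeadlock A (π (k + 1)).1 ∧ deadlockRank A (π (k + 1)).1 < deadlockRank A (π k).1 := by
    intro k hk
    rw [← (hp.2 k).2]
    by_cases h1 : A.P1 (π k).1
    · exact hmove k h1 hk
    · exact hk.of_not_P1 h1 (hp.2 k).1 rfl
  intro hn
  have hall : ∀ k, ForcesDeadlock A (π (n + k)).1 := by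
    intro k
    induction k with
    | zero => exact hn
    | succ k ih => exact (step _ ih).1
  obtain ⟨k, hk⟩ := WellFounded.not_rel_apply_succ (r := (· < ·))
    fun k => deadlockRank A (π (n + k)).1
  exact hk (step _ (hall k)).2

lemma forcesDeadlock_of_winningFrom_empty {σ : A.Strategy} {v : A.V}
    (hσ : σ.WinningFrom ∅ v) : ForcesDeadlock A v := by
  by_contra hv
  obtain ⟨π, hp, hc⟩ := σ.exists_consistent_play (fun u => ¬ ForcesDeadlock A u) hv
    (fun l hl hI h1 ⟨t⟩ => hI ⟨.move _ h1 (σ.legal v l hl h1).1 (σ.legal v l hl h1).2 t⟩)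
    (fun u hI h1 => by
      by_contra! hall
      exact hI ⟨.block h1 fun e he hs => (hall e he hs).some⟩)
  exact hσ π hp hc

end Deadlock

section Total

variable {C : Type} {A : Arena C} {W : Set (ℕ → C)}

def WinsAfter (A : Arena C) (W : Set (ℕ → C)) (w : List C) (v : A.V) : Prop :=
  ∃ σ : A.Strategy, σ.WinningFrom (contAfter W w) v

lemma WinsAfter.mono {w w' : List C} {v : A.V} (h : prefLe W w w') (hw : WinsAfter A W w v) :
    WinsAfter A W w' v :=
  let ⟨σ, hσ⟩ := hw
  ⟨σ, fun π hp hc => h (hσ π hp hc)⟩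

lemma Arena.Strategy.WinningFrom.winsAfter_append {σ : A.Strategy} {w : List C}
    {e : A.V × C × A.V} (hσ : σ.WinningFrom (contAfter W w) e.1) (he : e ∈ A.E)
    (hfirst : A.P1 e.1 → σ.next e.1 [] = e) :
    WinsAfter A W (w ++ [e.2.1]) e.2.2 := by
  refine ⟨σ.after e he, ?_⟩
  rw [contAfter_append]
  exact hσ.after he hfirst

def IsLeastWinning (A : Arena C) (W : Set (ℕ → C)) (v : A.V) (σ : A.Strategy) : Prop :=
  ∃ w₀, σ.WinningFrom (contAfter W w₀) v ∧ ∀ w, WinsAfter A W w v → prefLe W w₀ w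

variable [Nonempty C]

open scoped Classical in
noncomputable def optMove (A : Arena C) (W : Set (ℕ → C)) (v : A.V) : A.V × C × A.V :=
  if h1 : A.P1 v then
    if hd : ForcesDeadlock A v then (hd.exists_move h1).choose
    else if hσ : ∃ σ, IsLeastWinning A W v σ then hσ.choose.next v []
    else (A.succ v h1).choose
  else (v, Classical.arbitrary C, v)

lemma optMove_legal {v : A.V} (h1 : A.P1 v) : optMove A W v ∈ A.E ∧ (optMove A W v).1 = v := by
  unfold optMove
  rw [dif_pos h1]
  split_ifs with hd hσ
  · exact ⟨(hd.exists_move h1).choose_spec.1, (hd.exists_move h1).choose_spec.2.1⟩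
  · exact hσ.choose.legal v [] trivial h1
  · exact (A.succ v h1).choose_spec

lemma optMove_of_forcesDeadlock {v : A.V} (h1 : A.P1 v) (hd : ForcesDeadlock A v) :
    ForcesDeadlock A (optMove A W v).2.2 ∧
      deadlockRank A (optMove A W v).2.2 < deadlockRank A v := by
  unfold optMove
  rw [dif_pos h1, dif_pos hd]
  exact (hd.exists_move h1).choose_spec.2.2

lemma exists_isLeastWinning_optMove {v : A.V} (h1 : A.P1 v) (hd : ¬ ForcesDeadlock A v)
    (hσ : ∃ σ, IsLeastWinning A W v σ) :
    ∃ σ, IsLeastWinning A W v σ ∧ σ.next v [] = optMove A W v := by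
  refine ⟨hσ.choose, hσ.choose_spec, ?_⟩
  unfold optMove
  rw [dif_pos h1, dif_neg hd, dif_pos hσ]

noncomputable def optStrategy (A : Arena C) (W : Set (ℕ → C)) : A.Strategy :=
  .ofMove (optMove A W) fun _ h1 => optMove_legal h1

lemma winsAfter_of_optStrategy (hwf : PrefWellFounded W)
    (htot : ∀ w₁ w₂ : List C, PrefComparable W w₁ w₂) {v : A.V} {π : ℕ → A.V × C × A.V}
    (hp : A.PlayFrom v π) (hc : (optStrategy A W).Consistent v π) (hv : WinsAfter A W [] v)
    (hnd : ∀ n, ¬ ForcesDeadlock A (π n).1) (n : ℕ) :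
    WinsAfter A W (List.ofFn fun i : Fin n => Arena.playCol π i) (π n).1 := by
  induction n with
  | zero => rwa [hp.1]
  | succ n ih =>
    rw [ofFn_succ_eq_append, ← (hp.2 n).2]
    by_cases h1 : A.P1 (π n).1
    · obtain ⟨w₀, ⟨σ, hσ⟩, hmin⟩ :=
        hwf.exists_least htot (S := {w | WinsAfter A W w (π n).1}) ⟨_, ih⟩
      obtain ⟨σ₀, ⟨w₀, hσ₀, hmin⟩, hnext⟩ :=
        exists_isLeastWinning_optMove h1 (hnd n) ⟨σ, w₀, hσ, hmin⟩
      have hmove : π n = optMove A W (π n).1 :=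
        hc.eq_move (g := optMove A W) (fun _ _ _ _ => rfl) hp h1
      rw [← hmove] at hnext
      exact (hσ₀.winsAfter_append (hp.2 n).1 fun _ => hnext).mono
        (prefLe_append (hmin _ ih) _)
    · obtain ⟨σ, hσ⟩ := ih
      exact hσ.winsAfter_append (hp.2 n).1 fun h => absurd h h1

theorem memoryless_suffices_of_total {B : Set (List C)} (hwf : PrefWellFounded (SafeObj B))
    (htot : ∀ w₁ w₂ : List C, PrefComparable (SafeObj B) w₁ w₂) :
    SufficesIn (trivMem C) (SafeObj B) fun _ => True := by
  intro A _
  refine ⟨optStrategy A (SafeObj B), ⟨fun v _ => optMove A (SafeObj B) v, fun _ _ _ _ => rfl⟩, ?_⟩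
  rintro v ⟨σ, hσ⟩ π hp hc ⟨m, hm⟩
  have hnd : ∀ n, ¬ ForcesDeadlock A (π n).1 := not_forcesDeadlock_of_play hp fun n h1 hd => by
    rw [hc.eq_move (g := optMove A _) (fun _ _ _ _ => rfl) hp h1, (optMove_legal h1).2]
    exact optMove_of_forcesDeadlock h1 hd
  obtain ⟨σ', hσ'⟩ := winsAfter_of_optStrategy hwf htot hp hc ⟨σ, by rwa [contAfter_nil]⟩ hnd m
  rw [contAfter_safeObj_eq_empty hm] at hσ'
  exact hnd m (forcesDeadlock_of_winningFrom_empty hσ')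

end Total

section Fork

variable {C : Type}

/-- The moves of the fork arena when Player 1 commits to the continuation `y`: from `inl w` the
word `w` is spelled out up to `inl []`, the only vertex where `y` matters, and `inr z` spells
out `z`. -/
def forkMove (y : ℕ → C) : List C ⊕ (ℕ → C) → (List C ⊕ (ℕ → C)) × C × (List C ⊕ (ℕ → C))
  | .inl [] => (.inl [], y 0, .inr fun n => y (n + 1))
  | .inl (c :: l) => (.inl (c :: l), c, .inl l)
  | .inr z => (.inr z, z 0, .inr fun n => z (n + 1))

lemma forkMove_fst (y : ℕ → C) (v : List C ⊕ (ℕ → C)) : (forkMove y v).1 = v := by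
  rcases v with (_ | _) | _ <;> rfl

def forkArena (X : Set (ℕ → C)) (hX : X.Nonempty) : Arena C where
  V := List C ⊕ (ℕ → C)
  P1 _ := True
  E := {e | ∃ y ∈ X, e = forkMove y e.1}
  succ v _ := ⟨forkMove hX.some v,
    ⟨hX.some, hX.some_mem, congrArg _ (forkMove_fst _ v).symm⟩, forkMove_fst _ _⟩

namespace forkArena

variable {X : Set (ℕ → C)} {hX : X.Nonempty}
  {π : ℕ → (forkArena X hX).V × C × (forkArena X hX).V}

lemma exists_head_eq {v : (forkArena X hX).V} (hp : (forkArena X hX).PlayFrom v π) :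
    ∃ y ∈ X, π 0 = forkMove y v := by
  obtain ⟨y, hy, he⟩ := (hp.2 0).1
  exact ⟨y, hy, hp.1 ▸ he⟩

lemma playCol_inr {z : ℕ → C} (hp : (forkArena X hX).PlayFrom (.inr z) π) :
    Arena.playCol π = z := by
  funext n
  induction n generalizing z π with
  | zero =>
    obtain ⟨y, -, h0⟩ := exists_head_eq hp
    simp [Arena.playCol, h0, forkMove]
  | succ n ih =>
    obtain ⟨y, -, h0⟩ := exists_head_eq hp
    have hp' := hp.tail
    rw [h0] at hp'
    exact ih hp'

lemma reaches_inl_nil {w : List C} (hp : (forkArena X hX).PlayFrom (.inl w) π) :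
    (π w.length).1 = .inl [] := by
  induction w generalizing π with
  | nil => exact hp.1
  | cons c l ih =>
    obtain ⟨y, -, h0⟩ := exists_head_eq hp
    have hp' := hp.tail
    rw [h0] at hp'
    exact ih hp'

lemma playCol_inl {w : List C} {y : ℕ → C} (hp : (forkArena X hX).PlayFrom (.inl w) π)
    (hy : π w.length = forkMove y (.inl [])) : Arena.playCol π = wcat w y := by
  induction w generalizing π with
  | nil =>
    have hp' := hp.tail
    rw [List.length_nil] at hy
    rw [hy] at hp'
    rw [Arena.playCol_eq_wcat_tail, playCol_inr hp', hy, wcat_nil]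
    exact wcat_head_tail y
  | cons c l ih =>
    obtain ⟨_, -, h0⟩ := exists_head_eq hp
    have hp' := hp.tail
    rw [h0] at hp'
    rw [Arena.playCol_eq_wcat_tail, ih hp' hy, h0, wcat_cons c l]
    rfl

def forkStrategy {y : ℕ → C} (hy : y ∈ X) : (forkArena X hX).Strategy :=
  .ofMove (forkMove y) fun v _ =>
    ⟨⟨y, hy, congrArg (forkMove y) (forkMove_fst y v).symm⟩, forkMove_fst y v⟩

lemma forkStrategy_winningFrom {W : Set (ℕ → C)} {w : List C} {y : ℕ → C} (hy : y ∈ X)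
    (hw : y ∈ contAfter W w) : (forkStrategy (hX := hX) hy).WinningFrom W (.inl w) := by
  intro π hp hc
  have hmove := hc.eq_move (g := forkMove y) (fun _ _ _ _ => rfl) hp (n := w.length) trivial
  rw [reaches_inl_nil hp] at hmove
  rw [playCol_inl hp hmove]
  exact hw

lemma exists_mem_contAfter_of_memoryless {W : Set (ℕ → C)} {σ : (forkArena X hX).Strategy}
    (hσ : σ.BasedOn (trivMem C)) (hopt : σ.Optimal W) :
    ∃ y ∈ X, ∀ w, (∃ z ∈ X, z ∈ contAfter W w) → y ∈ contAfter W w := by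
  obtain ⟨nxt, hnxt⟩ := hσ
  have hchoice : σ.next (.inl []) [] = nxt (.inl []) () := hnxt _ [] trivial trivial
  obtain ⟨⟨y, hy, hey⟩, hsrc⟩ := σ.legal (.inl []) [] trivial trivial
  rw [hsrc] at hey
  refine ⟨y, hy, fun w ⟨z, hz, hzw⟩ => ?_⟩
  have hwin := hopt _ ⟨forkStrategy hz, forkStrategy_winningFrom hz hzw⟩
  obtain ⟨π, hp, hc⟩ := σ.exists_consistent_play (v := .inl w) (fun _ => True) trivial
    (fun _ _ _ _ => trivial) (fun _ _ h1 => absurd trivial h1)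
  have hmove := hc.eq_move (g := fun u => nxt u ()) hnxt hp (n := w.length) trivial
  rw [reaches_inl_nil hp, ← hchoice, hey] at hmove
  have := hwin π hp hc
  rwa [playCol_inl hp hmove] at this

end forkArena

theorem prefComparable_of_memoryless {W : Set (ℕ → C)}
    (hsuff : SufficesIn (trivMem C) W fun _ => True) (w₁ w₂ : List C) :
    PrefComparable W w₁ w₂ := by
  by_contra hinc
  simp only [PrefComparable, prefLe, not_or, Set.not_subset] at hinc
  obtain ⟨⟨x₁, hx₁, hx₁₂⟩, x₂, hx₂, hx₂₁⟩ := hinc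
  obtain ⟨σ, hσ, hopt⟩ := hsuff (forkArena {x₁, x₂} ⟨x₁, .inl rfl⟩) trivial
  obtain ⟨y, hy, hcommit⟩ := forkArena.exists_mem_contAfter_of_memoryless hσ hopt
  have h₁ := hcommit w₁ ⟨x₁, .inl rfl, hx₁⟩
  have h₂ := hcommit w₂ ⟨x₂, .inr rfl, hx₂⟩
  rcases hy with rfl | rfl
  · exact hx₁₂ h₂
  · exact hx₂₁ h₁

end Fork

/-- for a general safety objective with well-founded prefix preorder,
memoryless strategies suffice (the trivial memory structure suffices in all arenas)
iff the prefix preorder is total. -/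
theorem memoryless_iff_total {C : Type} [Nonempty C]
    (W : Set (ℕ → C))
    (hsafe : ∃ A : Set (List C), W = SafeObj A)
    (hwf : PrefWellFounded W) :
    SufficesIn (trivMem C) W (fun _ => True) ↔
      ∀ w₁ w₂ : List C, PrefComparable W w₁ w₂ := by
  obtain ⟨B, rfl⟩ := hsafe
  exact ⟨prefComparable_of_memoryless, memoryless_suffices_of_total hwf⟩

end RegularMemory
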